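/- Let f ∈ ℍ[z], let α be non-real, and suppose f^{eℓ}(α) ≠ 0 and f has a left zero in the conjugacy class [α]. Then f^{eℓ}(\bar{α}) ≠ f^{eℓ}(α) and f^{eℓ}(\bar{α}) ≠ −f^{eℓ}(α), and the unique left zero of f in [α] equals γ_ℓ = (\bar{α} f^{eℓ}(α) + α f^{eℓ}(\bar{α}))·(f^{eℓ}(α) + f^{eℓ}(\bar{α}))⁻¹. -/

import Mathlib

/-!
Every conjugate `γ = h⁻¹ α h` has the real part and the norm of `α`, so it is a root of the real
quadratic `z² - 2 Re(α) z + |α|²`, as are `α` and `ᾱ`. Reducing each `z ^ j` modulo that quadratic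
gives `f^{eℓ}(x) = x A + B` for all of these roots at once, with `A, B` independent of `x`. A left
zero `γ` forces `B = -γ A`, i.e. `f^{eℓ}(x) = (x - γ) A` with `A ≠ 0`. Then
`f^{eℓ}(ᾱ) - f^{eℓ}(α) = (ᾱ - α) A` and `f^{eℓ}(α) + f^{eℓ}(ᾱ) = (γ̄ - γ) A` are nonzero, and the
formula for `γ` reduces to an identity between `α`, `ᾱ` and `γ`. Since every left zero in `[α]`
equals that formula, the left zero is unique.
-/

open Polynomial

/-- Left evaluation of a quaternion polynomial: `f^{eℓ}(α) = Σ α^j f_j`. -/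
noncomputable def levalQ (α : Quaternion ℝ) (f : Polynomial (Quaternion ℝ)) : Quaternion ℝ :=
  f.sum fun j a => α ^ j * a

open Quaternion

theorem Polynomial.pow_eq_smul_add_of_aeval_eq_zero {R S : Type*} [CommRing R] [Ring S]
    [Algebra R S] {q : R[X]} (hq : q.Monic) (hdeg : q.natDegree = 2) {x : S}
    (hx : aeval x q = 0) (j : ℕ) :
    x ^ j = (X ^ j %ₘ q).coeff 1 • x + algebraMap R S ((X ^ j %ₘ q).coeff 0) := by
  have hq1 : q ≠ 1 := fun h => by simp [h] at hdeg
  have hrem : (X ^ j %ₘ q).natDegree ≤ 1 := by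
    have := natDegree_modByMonic_lt (X ^ j) hq hq1
    omega
  calc x ^ j = aeval x (X ^ j %ₘ q) := by rw [aeval_modByMonic_eq_self_of_root hx, map_pow, aeval_X]
    _ = _ := by
      rw [eq_X_add_C_of_natDegree_le_one hrem]
      simp only [map_add, map_mul, aeval_C, aeval_X, coeff_add, coeff_mul_X, coeff_C_zero,
        coeff_C_succ, add_zero, Algebra.smul_def, mul_coeff_zero, coeff_X_zero, mul_zero, zero_add]

theorem exists_levalQ_eq_mul_add {q : ℝ[X]} (hq : q.Monic) (hdeg : q.natDegree = 2)
    (f : (Quaternion ℝ)[X]) :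
    ∃ A B : Quaternion ℝ, ∀ x, aeval x q = 0 → levalQ x f = x * A + B := by
  refine ⟨f.sum fun j a => (X ^ j %ₘ q).coeff 1 • a, f.sum fun j a => (X ^ j %ₘ q).coeff 0 • a,
    fun x hx => ?_⟩
  simp only [levalQ, Polynomial.sum_def, Finset.mul_sum, ← Finset.sum_add_distrib]
  refine Finset.sum_congr rfl fun j _ => ?_
  rw [pow_eq_smul_add_of_aeval_eq_zero hq hdeg hx j, add_mul, smul_mul_assoc, mul_smul_comm,
    Algebra.algebraMap_eq_smul_one, smul_mul_assoc, one_mul]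

namespace Quaternion

theorem re_mul_comm (a b : ℍ[ℝ]) : (a * b).re = (b * a).re := by
  simp only [re_mul]; ring

theorem re_inv_mul_mul {h : ℍ[ℝ]} (hh : h ≠ 0) (a : ℍ[ℝ]) : (h⁻¹ * a * h).re = a.re := by
  rw [re_mul_comm, ← mul_assoc, mul_inv_cancel₀ hh, one_mul]

theorem normSq_inv_mul_mul {h : ℍ[ℝ]} (hh : h ≠ 0) (a : ℍ[ℝ]) :
    normSq (h⁻¹ * a * h) = normSq a := by
  have : normSq h ≠ 0 := normSq_ne_zero.mpr hh
  simp only [map_mul, map_inv₀]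
  field_simp

theorem star_inv_mul_mul_ne_self {h a : ℍ[ℝ]} (hh : h ≠ 0) (ha : star a ≠ a) :
    star (h⁻¹ * a * h) ≠ h⁻¹ * a * h := by
  rw [Ne, star_eq_self] at ha ⊢
  intro hr
  apply ha
  calc a = h * (h⁻¹ * a * h) * h⁻¹ := by
        rw [← mul_assoc, ← mul_assoc, mul_inv_cancel₀ hh, one_mul, mul_assoc, mul_inv_cancel₀ hh,
          mul_one]
    _ = _ := by rw [hr, re_inv_mul_mul hh, ← coe_commutes, mul_assoc, mul_inv_cancel₀ hh, mul_one]

theorem star_ne_self_of_im_ne_zero {a : ℍ[ℝ]} (ha : a.im ≠ 0) : star a ≠ a := by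
  rw [Ne, star_eq_self]
  intro h
  exact ha (by rw [h, im_coe])

/-- `(X - a) * (X - star a)`, which has real coefficients. -/
noncomputable def realCharpoly (a : ℍ[ℝ]) : ℝ[X] := X ^ 2 - C (2 * a.re) * X + C (normSq a)

theorem realCharpoly_monic (a : ℍ[ℝ]) : (realCharpoly a).Monic := by
  unfold realCharpoly; monicity!

theorem natDegree_realCharpoly (a : ℍ[ℝ]) : (realCharpoly a).natDegree = 2 := by
  unfold realCharpoly; compute_degree!

theorem aeval_realCharpoly_self (a : ℍ[ℝ]) : aeval a (realCharpoly a) = 0 := by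
  have h2 : aeval a (C (2 * a.re)) = a + star a := by rw [aeval_C, self_add_star']; rfl
  have hn : aeval a (C (normSq a)) = star a * a := by rw [aeval_C, star_mul_self]; rfl
  rw [realCharpoly, map_add, map_sub, map_mul, h2, hn, map_pow, aeval_X]
  noncomm_ring

theorem star_mul_sub_add_mul_star_sub {α γ : ℍ[ℝ]} (hre : γ.re = α.re)
    (hnorm : normSq γ = normSq α) :
    star α * (α - γ) + α * (star α - γ) = γ * (α - γ + (star α - γ)) := by
  have htr : α + star α = γ + star γ := by rw [self_add_star', self_add_star', hre]
  have hn : star α * α = star γ * γ := by rw [star_mul_self, star_mul_self, hnorm]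
  have hn' : α * star α = star γ * γ := by rw [self_mul_star, star_mul_self, hnorm]
  have hcomm : γ * star γ = star γ * γ := by rw [self_mul_star, star_mul_self]
  calc star α * (α - γ) + α * (star α - γ) = star α * α + α * star α - (α + star α) * γ := by
        noncomm_ring
    _ = star γ * γ + star γ * γ - (γ + star γ) * γ := by rw [hn, hn', htr]
    _ = γ * (γ + star γ) - γ * γ - γ * γ := by rw [mul_add, hcomm]; noncomm_ring
    _ = γ * (α - γ + (star α - γ)) := by rw [← htr]; noncomm_ring

end Quaternion

section LeftZero

variable {α γ : ℍ[ℝ]} {f : ℍ[ℝ][X]}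

theorem exists_levalQ_eq_sub_mul (hre : γ.re = α.re) (hnorm : normSq γ = normSq α)
    (hγ0 : levalQ γ f = 0) (hα0 : levalQ α f ≠ 0) :
    ∃ A ≠ 0, levalQ α f = (α - γ) * A ∧ levalQ (star α) f = (star α - γ) * A := by
  obtain ⟨A, B, hAB⟩ :=
    exists_levalQ_eq_mul_add (realCharpoly_monic α) (natDegree_realCharpoly α) f
  have hroot : ∀ x : ℍ[ℝ], x.re = α.re → normSq x = normSq α →
      aeval x (realCharpoly α) = 0 := fun x hxre hxnorm => by
    rw [← aeval_realCharpoly_self x, realCharpoly, realCharpoly, hxre, hxnorm]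
  have hsub : ∀ x : ℍ[ℝ], x.re = α.re → normSq x = normSq α →
      levalQ x f = (x - γ) * A := fun x hxre hxnorm => by
    rw [← sub_zero (levalQ x f), ← hγ0, hAB x (hroot x hxre hxnorm), hAB γ (hroot γ hre hnorm),
      sub_mul]
    abel
  have hα := hsub α rfl rfl
  exact ⟨A, fun hA => hα0 (by rw [hα, hA, mul_zero]), hα, hsub (star α) (re_star α) (normSq_star α)⟩

theorem levalQ_star_ne_levalQ (hre : γ.re = α.re) (hnorm : normSq γ = normSq α)
    (hγ0 : levalQ γ f = 0) (hα0 : levalQ α f ≠ 0) (hα : star α ≠ α) :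
    levalQ (star α) f ≠ levalQ α f := by
  obtain ⟨A, hA, hα', hsα⟩ := exists_levalQ_eq_sub_mul hre hnorm hγ0 hα0
  rw [hα', hsα, Ne, ← sub_eq_zero, ← sub_mul, sub_sub_sub_cancel_right]
  exact mul_ne_zero (sub_ne_zero.mpr hα) hA

theorem levalQ_add_levalQ_star_ne_zero (hre : γ.re = α.re) (hnorm : normSq γ = normSq α)
    (hγ0 : levalQ γ f = 0) (hα0 : levalQ α f ≠ 0) (hγ : star γ ≠ γ) :
    levalQ α f + levalQ (star α) f ≠ 0 := by
  obtain ⟨A, hA, hα', hsα⟩ := exists_levalQ_eq_sub_mul hre hnorm hγ0 hα0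
  have htr : α - γ + (star α - γ) = star γ - γ := by
    rw [sub_add_sub_comm, self_add_star', ← hre, ← self_add_star']
    abel
  rw [hα', hsα, ← add_mul, htr]
  exact mul_ne_zero (sub_ne_zero.mpr hγ) hA

theorem eq_mul_inv_of_levalQ_eq_zero (hre : γ.re = α.re) (hnorm : normSq γ = normSq α)
    (hγ0 : levalQ γ f = 0) (hα0 : levalQ α f ≠ 0) (hγ : star γ ≠ γ) :
    γ = (star α * levalQ α f + α * levalQ (star α) f) * (levalQ α f + levalQ (star α) f)⁻¹ := by
  rw [eq_mul_inv_iff_mul_eq₀ (levalQ_add_levalQ_star_ne_zero hre hnorm hγ0 hα0 hγ)]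
  obtain ⟨A, -, hα', hsα⟩ := exists_levalQ_eq_sub_mul hre hnorm hγ0 hα0
  rw [hα', hsα, ← mul_assoc, ← mul_assoc, ← add_mul, ← add_mul, ← mul_assoc,
    star_mul_sub_add_mul_star_sub hre hnorm]

end LeftZero

/-- Formula for the unique left zero of `f` in the conjugacy class `[α]`. -/
theorem stmt7 (α : Quaternion ℝ) (hα : α.im ≠ 0) (f : Polynomial (Quaternion ℝ))
    (hfα : levalQ α f ≠ 0)
    (hzero : ∃ γ : Quaternion ℝ, (∃ h : Quaternion ℝ, h ≠ 0 ∧ γ = h⁻¹ * α * h) ∧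
      levalQ γ f = 0) :
    levalQ (star α) f ≠ levalQ α f ∧ levalQ (star α) f ≠ -levalQ α f ∧
    (∃ h : Quaternion ℝ, h ≠ 0 ∧
        (star α * levalQ α f + α * levalQ (star α) f) *
          (levalQ α f + levalQ (star α) f)⁻¹ = h⁻¹ * α * h) ∧
    levalQ ((star α * levalQ α f + α * levalQ (star α) f) *
      (levalQ α f + levalQ (star α) f)⁻¹) f = 0 ∧
    ∀ γ : Quaternion ℝ, (∃ h : Quaternion ℝ, h ≠ 0 ∧ γ = h⁻¹ * α * h) → levalQ γ f = 0 →
      γ = (star α * levalQ α f + α * levalQ (star α) f) *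
        (levalQ α f + levalQ (star α) f)⁻¹ := by
  have hα' := star_ne_self_of_im_ne_zero hα
  have hformula : ∀ γ : Quaternion ℝ, (∃ h : Quaternion ℝ, h ≠ 0 ∧ γ = h⁻¹ * α * h) →
      levalQ γ f = 0 → γ = (star α * levalQ α f + α * levalQ (star α) f) *
        (levalQ α f + levalQ (star α) f)⁻¹ := by
    rintro _ ⟨h, hh, rfl⟩ hγ0
    exact eq_mul_inv_of_levalQ_eq_zero (re_inv_mul_mul hh α) (normSq_inv_mul_mul hh α) hγ0 hfα
      (star_inv_mul_mul_ne_self hh hα')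
  obtain ⟨γ, hγ, hγ0⟩ := hzero
  have hγform := hformula γ hγ hγ0
  obtain ⟨h, hh, rfl⟩ := hγ
  have hre := re_inv_mul_mul hh α
  have hnorm := normSq_inv_mul_mul hh α
  refine ⟨levalQ_star_ne_levalQ hre hnorm hγ0 hfα hα', fun hneg => ?_, ⟨h, hh, hγform.symm⟩,
    hγform ▸ hγ0, hformula⟩
  exact levalQ_add_levalQ_star_ne_zero hre hnorm hγ0 hfα (star_inv_mul_mul_ne_self hh hα')
    (by rw [hneg, add_neg_cancel])
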